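/- For all bi-intuitionistic formulas φ, ψ: every bi-Heyting algebra validates the equation φ = ψ (under every valuation) if and only if φ ⊢_w ψ and ψ ⊢_w φ in weak bi-intuitionistic logic. -/
import Mathlib

/-- Formulas of the bi-intuitionistic language. -/
inductive Form : Type
  | var : ℕ → Form
  | top : Form
  | bot : Form
  | and : Form → Form → Form
  | or : Form → Form → Form
  | imp : Form → Form → Form
  | excl : Form → Form → Form

/-- Negation `¬φ := φ → ⊥`. -/
def Form.neg (φ : Form) : Form := φ.imp .bot

/-- Co-negation `∼φ := ⊤ ∖ φ`. -/
def Form.wneg (φ : Form) : Form := Form.excl .top φ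

/-- The axioms A1–A14 of the generalized Hilbert calculi for bi-intuitionistic logic. -/
inductive Ax : Form → Prop
  | a1 (φ ψ : Form) : Ax (φ.imp (ψ.imp φ))
  | a2 (φ ψ χ : Form) : Ax ((φ.imp (ψ.imp χ)).imp ((φ.imp ψ).imp (φ.imp χ)))
  | a3 (φ ψ : Form) : Ax (φ.imp (φ.or ψ))
  | a4 (φ ψ : Form) : Ax (ψ.imp (φ.or ψ))
  | a5 (φ ψ χ : Form) : Ax ((φ.imp χ).imp ((ψ.imp χ).imp ((φ.or ψ).imp χ)))
  | a6 (φ ψ : Form) : Ax ((φ.and ψ).imp φ)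
  | a7 (φ ψ : Form) : Ax ((φ.and ψ).imp ψ)
  | a8 (φ ψ χ : Form) : Ax ((χ.imp φ).imp ((χ.imp ψ).imp (χ.imp (φ.and ψ))))
  | a9 (φ : Form) : Ax (Form.bot.imp φ)
  | a10 (φ : Form) : Ax (φ.imp Form.top)
  | a11 (φ ψ : Form) : Ax (φ.imp (ψ.or (φ.excl ψ)))
  | a12 (φ ψ : Form) : Ax ((φ.excl ψ).imp (φ.imp ψ).wneg)
  | a13 (φ ψ χ : Form) : Ax (((φ.excl ψ).excl χ).imp (φ.excl (ψ.or χ)))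
  | a14 (φ ψ : Form) : Ax ((φ.excl ψ).neg.imp (φ.imp ψ))

/-- The strong bi-intuitionistic logic `sBIL`. -/
inductive sprv : Set Form → Form → Prop
  | ax {Γ φ} : Ax φ → sprv Γ φ
  | el {Γ φ} : φ ∈ Γ → sprv Γ φ
  | mp {Γ φ ψ} : sprv Γ (φ.imp ψ) → sprv Γ φ → sprv Γ ψ
  | sdn {Γ φ} : sprv Γ φ → sprv Γ φ.wneg.neg

/-- The weak bi-intuitionistic logic `wBIL`. -/
inductive wprv : Set Form → Form → Prop
  | ax {Γ φ} : Ax φ → wprv Γ φ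
  | el {Γ φ} : φ ∈ Γ → wprv Γ φ
  | mp {Γ φ ψ} : wprv Γ (φ.imp ψ) → wprv Γ φ → wprv Γ ψ
  | wdn {Γ : Set Form} {φ} : wprv ∅ φ → wprv Γ φ.wneg.neg

/-- Interpretation of formulas in a bi-Heyting algebra via a valuation. -/
def interp {α : Type*} [BiheytingAlgebra α] (v : ℕ → α) : Form → α
  | .var p => v p
  | .top => ⊤
  | .bot => ⊥
  | .and φ ψ => interp v φ ⊓ interp v ψ
  | .or φ ψ => interp v φ ⊔ interp v ψ
  | .imp φ ψ => interp v φ ⇨ interp v ψ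
  | .excl φ ψ => interp v φ \ interp v ψ

namespace BILProof

/-! ### Basic proof theory of `wprv` -/

theorem weaken {Γ Δ : Set Form} {θ : Form} (h : wprv Γ θ) (hs : Γ ⊆ Δ) : wprv Δ θ := by
  induction h generalizing Δ with
  | ax ha => exact .ax ha
  | el hm => exact .el (hs hm)
  | mp _ _ ih1 ih2 => exact .mp (ih1 hs) (ih2 hs)
  | wdn h _ => exact .wdn h

/-- `prv θ` means `θ` is a theorem of wBIL. -/
def prv (θ : Form) : Prop := wprv ∅ θ

theorem wk0 {Γ : Set Form} {θ : Form} (h : prv θ) : wprv Γ θ := weaken h (Set.empty_subset _)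

theorem imp_id (φ : Form) : prv (φ.imp φ) :=
  .mp (.mp (.ax (.a2 φ (φ.imp φ) φ)) (.ax (.a1 _ _))) (.ax (.a1 _ _))

/-- Deduction theorem. -/
theorem dt_aux {Δ : Set Form} {ψ : Form} (h : wprv Δ ψ) :
    ∀ (Γ : Set Form) (φ : Form), Δ ⊆ insert φ Γ → wprv Γ (φ.imp ψ) := by
  induction h with
  | ax ha => exact fun Γ φ _ => .mp (.ax (.a1 _ _)) (.ax ha)
  | @el _ θ hm =>
    intro Γ φ hs
    rcases hs hm with h | h
    · subst h; exact wk0 (imp_id _)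
    · exact .mp (.ax (.a1 _ _)) (.el h)
  | mp _ _ ih1 ih2 =>
    intro Γ φ hs
    exact .mp (.mp (.ax (.a2 _ _ _)) (ih1 Γ φ hs)) (ih2 Γ φ hs)
  | wdn h _ =>
    intro Γ φ _
    exact .mp (.ax (.a1 _ _)) (.wdn h)

theorem dt {Γ : Set Form} {φ ψ : Form} (h : wprv (insert φ Γ) ψ) : wprv Γ (φ.imp ψ) :=
  dt_aux h Γ φ le_rfl

/-- The Lindenbaum preorder. -/
def fle (φ ψ : Form) : Prop := prv (φ.imp ψ)

theorem fle_refl (φ : Form) : fle φ φ := imp_id φ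

theorem fle_intro {φ ψ : Form} (h : wprv {φ} ψ) : fle φ ψ := by
  apply dt (Γ := ∅); rwa [← Set.singleton_def]

theorem fle_elim {φ ψ : Form} (h : fle φ ψ) : wprv {φ} ψ :=
  .mp (wk0 h) (.el rfl)

theorem fle_trans {φ ψ χ : Form} (h1 : fle φ ψ) (h2 : fle ψ χ) : fle φ χ :=
  fle_intro (.mp (wk0 h2) (fle_elim h1))

theorem fle_and_left (φ ψ : Form) : fle (φ.and ψ) φ := .ax (.a6 _ _)
theorem fle_and_right (φ ψ : Form) : fle (φ.and ψ) ψ := .ax (.a7 _ _)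
theorem fle_and_intro {φ ψ χ : Form} (h1 : fle χ φ) (h2 : fle χ ψ) : fle χ (φ.and ψ) :=
  .mp (.mp (.ax (.a8 _ _ _)) h1) h2
theorem fle_or_left (φ ψ : Form) : fle φ (φ.or ψ) := .ax (.a3 _ _)
theorem fle_or_right (φ ψ : Form) : fle ψ (φ.or ψ) := .ax (.a4 _ _)
theorem fle_or_elim {φ ψ χ : Form} (h1 : fle φ χ) (h2 : fle ψ χ) : fle (φ.or ψ) χ :=
  .mp (.mp (.ax (.a5 _ _ _)) h1) h2
theorem fle_top (φ : Form) : fle φ .top := .ax (.a10 _)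
theorem fle_bot (φ : Form) : fle .bot φ := .ax (.a9 _)

theorem andI {Γ : Set Form} {φ ψ : Form} (h1 : wprv Γ φ) (h2 : wprv Γ ψ) :
    wprv Γ (φ.and ψ) :=
  .mp (.mp (.mp (.ax (.a8 φ ψ φ)) (wk0 (imp_id φ))) (.mp (.ax (.a1 _ _)) h2)) h1

theorem fle_himp_iff {φ ψ χ : Form} : fle φ (ψ.imp χ) ↔ fle (φ.and ψ) χ := by
  constructor
  · intro h
    apply fle_intro
    exact .mp (.mp (wk0 h) (.mp (.ax (.a6 _ _)) (.el rfl))) (.mp (.ax (.a7 _ _)) (.el rfl))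
  · intro h
    apply dt (Γ := ∅)
    apply dt
    have hφ : wprv (insert ψ (insert φ ∅)) φ := .el (Set.mem_insert_of_mem _ (Set.mem_insert _ _))
    have hψ : wprv (insert ψ (insert φ ∅)) ψ := .el (Set.mem_insert _ _)
    exact .mp (wk0 h) (andI hφ hψ)

theorem fle_sdiff_iff {φ ψ χ : Form} : fle (φ.excl ψ) χ ↔ fle φ (ψ.or χ) := by
  constructor
  · intro h
    refine fle_trans (.ax (.a11 φ ψ)) (fle_or_elim (fle_or_left _ _) ?_)
    exact fle_trans h (fle_or_right _ _)
  · intro h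
    have s1 : prv ((φ.imp (ψ.or χ)).wneg.neg) := .wdn h
    have s3 : fle (φ.excl (ψ.or χ)) Form.bot := fle_trans (.ax (.a12 _ _)) s1
    have s4 : fle (φ.excl (ψ.or χ)) χ := fle_trans s3 (fle_bot χ)
    have s5 : fle ((φ.excl ψ).excl χ) χ := fle_trans (.ax (.a13 _ _ _)) s4
    exact fle_trans (.ax (.a11 (φ.excl ψ) χ)) (fle_or_elim (fle_refl χ) s5)

theorem fle_imp_mono {φ φ' ψ ψ' : Form} (h1 : fle φ' φ) (h2 : fle ψ ψ') :
    fle (φ.imp ψ) (φ'.imp ψ') := by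
  rw [fle_himp_iff]
  have ha : fle ((φ.imp ψ).and φ') (φ.imp ψ) := fle_and_left _ _
  have hb : fle ((φ.imp ψ).and φ') φ := fle_trans (fle_and_right _ _) h1
  have : fle ((φ.imp ψ).and φ') ψ := fle_intro (.mp (fle_elim ha) (fle_elim hb))
  exact fle_trans this h2

theorem fle_excl_mono {φ φ' ψ ψ' : Form} (h1 : fle φ φ') (h2 : fle ψ' ψ) :
    fle (φ.excl ψ) (φ'.excl ψ') := by
  rw [fle_sdiff_iff]
  refine fle_trans h1 (fle_trans (.ax (.a11 φ' ψ')) ?_)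
  exact fle_or_elim (fle_trans h2 (fle_or_left _ _)) (fle_or_right _ _)

/-! ### The Lindenbaum–Tarski algebra -/

instance formSetoid : Setoid Form :=
  ⟨fun φ ψ => fle φ ψ ∧ fle ψ φ,
   fun φ => ⟨fle_refl φ, fle_refl φ⟩,
   fun h => ⟨h.2, h.1⟩,
   fun h1 h2 => ⟨fle_trans h1.1 h2.1, fle_trans h2.2 h1.2⟩⟩

def Lind : Type := Quotient formSetoid

def Lind.mk (φ : Form) : Lind := Quotient.mk formSetoid φ

def Lind.le : Lind → Lind → Prop :=
  Quotient.lift₂ fle (fun _ _ _ _ ha hb => propext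
    ⟨fun h => fle_trans ha.2 (fle_trans h hb.1), fun h => fle_trans ha.1 (fle_trans h hb.2)⟩)

instance : PartialOrder Lind where
  le := Lind.le
  le_refl a := Quotient.inductionOn a fle_refl
  le_trans a b c := Quotient.inductionOn₃ a b c (fun _ _ _ => fle_trans)
  le_antisymm a b := Quotient.inductionOn₂ a b (fun _ _ h1 h2 => Quotient.sound ⟨h1, h2⟩)

theorem Lind.mk_le_mk {φ ψ : Form} : Lind.mk φ ≤ Lind.mk ψ ↔ fle φ ψ := Iff.rfl

def Lind.sup : Lind → Lind → Lind := Quotient.map₂ Form.or (fun _ _ h1 _ _ h2 =>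
    ⟨fle_or_elim (fle_trans h1.1 (fle_or_left _ _)) (fle_trans h2.1 (fle_or_right _ _)),
     fle_or_elim (fle_trans h1.2 (fle_or_left _ _)) (fle_trans h2.2 (fle_or_right _ _))⟩)

def Lind.inf : Lind → Lind → Lind := Quotient.map₂ Form.and (fun _ _ h1 _ _ h2 =>
    ⟨fle_and_intro (fle_trans (fle_and_left _ _) h1.1) (fle_trans (fle_and_right _ _) h2.1),
     fle_and_intro (fle_trans (fle_and_left _ _) h1.2) (fle_trans (fle_and_right _ _) h2.2)⟩)

def Lind.himp : Lind → Lind → Lind := Quotient.map₂ Form.imp (fun _ _ h1 _ _ h2 =>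
    ⟨fle_imp_mono h1.2 h2.1, fle_imp_mono h1.1 h2.2⟩)

def Lind.sdiff : Lind → Lind → Lind := Quotient.map₂ Form.excl (fun _ _ h1 _ _ h2 =>
    ⟨fle_excl_mono h1.1 h2.2, fle_excl_mono h1.2 h2.1⟩)

instance : Lattice Lind where
  sup := Lind.sup
  le_sup_left a b := Quotient.inductionOn₂ a b (fun _ _ => fle_or_left _ _)
  le_sup_right a b := Quotient.inductionOn₂ a b (fun _ _ => fle_or_right _ _)
  sup_le a b c := Quotient.inductionOn₃ a b c (fun _ _ _ => fle_or_elim)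
  inf := Lind.inf
  inf_le_left a b := Quotient.inductionOn₂ a b (fun _ _ => fle_and_left _ _)
  inf_le_right a b := Quotient.inductionOn₂ a b (fun _ _ => fle_and_right _ _)
  le_inf a b c := Quotient.inductionOn₃ a b c (fun _ _ _ => fle_and_intro)

instance : BiheytingAlgebra Lind where
  top := Lind.mk .top
  le_top a := Quotient.inductionOn a fle_top
  bot := Lind.mk .bot
  bot_le a := Quotient.inductionOn a fle_bot
  himp := Lind.himp
  le_himp_iff a b c := Quotient.inductionOn₃ a b c (fun _ _ _ => fle_himp_iff)
  compl := fun a => Lind.himp a (Lind.mk .bot)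
  himp_bot _ := rfl
  sdiff := Lind.sdiff
  sdiff_le_iff a b c := Quotient.inductionOn₃ a b c (fun _ _ _ => fle_sdiff_iff)
  hnot := fun a => Lind.sdiff (Lind.mk .top) a
  top_sdiff _ := rfl

theorem Lind.top_def : (⊤ : Lind) = Lind.mk .top := rfl
theorem Lind.bot_def : (⊥ : Lind) = Lind.mk .bot := rfl
theorem Lind.sup_mk {φ ψ : Form} : Lind.mk φ ⊔ Lind.mk ψ = Lind.mk (φ.or ψ) := rfl
theorem Lind.inf_mk {φ ψ : Form} : Lind.mk φ ⊓ Lind.mk ψ = Lind.mk (φ.and ψ) := rfl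
theorem Lind.himp_mk {φ ψ : Form} : Lind.mk φ ⇨ Lind.mk ψ = Lind.mk (φ.imp ψ) := rfl
theorem Lind.sdiff_mk {φ ψ : Form} : Lind.mk φ \ Lind.mk ψ = Lind.mk (φ.excl ψ) := rfl

theorem interp_Lind (θ : Form) : interp (fun n => Lind.mk (.var n)) θ = Lind.mk θ := by
  induction θ with
  | var p => rfl
  | top => rfl
  | bot => rfl
  | and φ ψ ih1 ih2 => show _ ⊓ _ = _; rw [ih1, ih2, Lind.inf_mk]
  | or φ ψ ih1 ih2 => show _ ⊔ _ = _; rw [ih1, ih2, Lind.sup_mk]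
  | imp φ ψ ih1 ih2 => show _ ⇨ _ = _; rw [ih1, ih2, Lind.himp_mk]
  | excl φ ψ ih1 ih2 => show _ \ _ = _; rw [ih1, ih2, Lind.sdiff_mk]

/-! ### Soundness -/

variable {α : Type*} [BiheytingAlgebra α]

theorem ax_sound {θ : Form} (h : Ax θ) (v : ℕ → α) : interp v θ = ⊤ := by
  induction h with
  | a1 φ ψ =>
    simp only [interp, himp_eq_top_iff, le_himp_iff]; exact inf_le_left
  | a2 φ ψ χ =>
    simp only [interp, himp_eq_top_iff, le_himp_iff]
    set a := interp v φ; set b := interp v ψ; set c := interp v χ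
    calc (a ⇨ b ⇨ c) ⊓ (a ⇨ b) ⊓ a ≤ ((a ⇨ b ⇨ c) ⊓ a) ⊓ ((a ⇨ b) ⊓ a) := by
          refine le_inf (inf_le_inf_right _ inf_le_left) (inf_le_inf_right _ inf_le_right)
      _ ≤ (b ⇨ c) ⊓ b := inf_le_inf himp_inf_le himp_inf_le
      _ ≤ c := himp_inf_le
  | a3 φ ψ => simp only [interp, himp_eq_top_iff]; exact le_sup_left
  | a4 φ ψ => simp only [interp, himp_eq_top_iff]; exact le_sup_right
  | a5 φ ψ χ =>
    simp only [interp, himp_eq_top_iff, le_himp_iff]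
    set a := interp v φ; set b := interp v ψ; set c := interp v χ
    rw [inf_sup_left]
    refine sup_le ?_ ?_
    · exact le_trans (inf_le_inf_right _ inf_le_left) himp_inf_le
    · exact le_trans (inf_le_inf_right _ inf_le_right) himp_inf_le
  | a6 φ ψ => simp only [interp, himp_eq_top_iff]; exact inf_le_left
  | a7 φ ψ => simp only [interp, himp_eq_top_iff]; exact inf_le_right
  | a8 φ ψ χ =>
    simp only [interp, himp_eq_top_iff, le_himp_iff]
    refine le_inf ?_ ?_
    · exact le_trans (inf_le_inf_right _ inf_le_left) himp_inf_le
    · exact le_trans (inf_le_inf_right _ inf_le_right) himp_inf_le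
  | a9 φ => simp only [interp, himp_eq_top_iff]; exact bot_le
  | a10 φ => simp only [interp, himp_eq_top_iff]; exact le_top
  | a11 φ ψ => simp only [interp, himp_eq_top_iff]; exact le_sup_sdiff
  | a12 φ ψ =>
    simp only [interp, Form.wneg, himp_eq_top_iff]
    set a := interp v φ; set b := interp v ψ
    calc a \ b ≤ a \ (a ⊓ (a ⇨ b)) := sdiff_le_sdiff_left inf_himp_le
      _ = a \ (a ⇨ b) := sdiff_inf_self_left a (a ⇨ b)
      _ ≤ ⊤ \ (a ⇨ b) := sdiff_le_sdiff_right le_top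
  | a13 φ ψ χ =>
    simp only [interp, himp_eq_top_iff]
    exact le_of_eq sdiff_sdiff_left
  | a14 φ ψ =>
    simp only [interp, Form.neg, himp_eq_top_iff, le_himp_iff]
    set a := interp v φ; set b := interp v ψ
    calc (a \ b ⇨ ⊥) ⊓ a ≤ (a \ b ⇨ ⊥) ⊓ (b ⊔ a \ b) := inf_le_inf_left _ le_sup_sdiff
      _ = ((a \ b ⇨ ⊥) ⊓ b) ⊔ ((a \ b ⇨ ⊥) ⊓ (a \ b)) := inf_sup_left _ _ _
      _ ≤ b ⊔ ⊥ := sup_le_sup inf_le_right himp_inf_le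
      _ = b := sup_bot_eq _

theorem soundness {Γ : Set Form} {θ : Form} (h : wprv Γ θ) (v : ℕ → α)
    (hΓ : ∀ γ ∈ Γ, interp v γ = ⊤) : interp v θ = ⊤ := by
  induction h with
  | ax ha => exact ax_sound ha v
  | el hm => exact hΓ _ hm
  | @mp _ φ ψ _ _ ih1 ih2 =>
    have h1 := ih1 hΓ
    have h2 := ih2 hΓ
    simp only [interp, himp_eq_top_iff] at h1
    rw [eq_top_iff, ← h2]; exact h1
  | @wdn Γ' φ h ih =>
    have h1 : interp v φ = ⊤ := ih (fun _ hm => absurd hm (Set.notMem_empty _))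
    show (⊤ \ interp v φ) ⇨ ⊥ = ⊤
    rw [h1, sdiff_self, himp_eq_top_iff]

end BILProof

open BILProof in
theorem BHA_eq_iff_wBIL_interderivable (φ ψ : Form) :
    (∀ (α : Type) [BiheytingAlgebra α] (v : ℕ → α), interp v φ = interp v ψ) ↔
      (wprv {φ} ψ ∧ wprv {ψ} φ) := by
  constructor
  · intro h
    have := h Lind (fun n => Lind.mk (.var n))
    rw [interp_Lind, interp_Lind] at this
    have heq : fle φ ψ ∧ fle ψ φ := Quotient.exact this
    exact ⟨fle_elim heq.1, fle_elim heq.2⟩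
  · rintro ⟨h1, h2⟩ α _ v
    have p1 : prv (φ.imp ψ) := fle_intro h1
    have p2 : prv (ψ.imp φ) := fle_intro h2
    have s1 := soundness p1 v (fun _ hm => absurd hm (Set.notMem_empty _))
    have s2 := soundness p2 v (fun _ hm => absurd hm (Set.notMem_empty _))
    simp only [interp, himp_eq_top_iff] at s1 s2
    exact le_antisymm s1 s2
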